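/- Consider P_{ζ,π}(t) = cos(ζ)cos(t) − sin(ζ)cos(3t). If cot(ζ) ≥ 9 (with ζ ∈ (0, π/2)), then t = 0 is the unique global maximum point of P_{ζ,π} in [−π/3, π/3]; if cot(ζ) < 9, then t = 0 is a local minimum and the two solutions t_± ∈ [−π/3, π/3] of 4 sin²(t) = 3 − cot(ζ)/3 are the global maximum points. -/

import Mathlib

open Real

/-- `P_{ζ,π}(t) = cos ζ · cos t − sin ζ · cos(3t)`. -/
noncomputable def PfunPi (ζ t : ℝ) : ℝ :=
  Real.cos ζ * Real.cos t - Real.sin ζ * Real.cos (3 * t)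

/-!
Since `cos (3t) = 4 cos³ t − 3 cos t`, for `0 < ζ < π/2` we have
`P_{ζ,π}(t) = sin ζ · q(cos t)` with the cubic `q(c) = (κ + 3) c − 4 c³`, `κ = cot ζ`, and `cos t`
ranges over `[1/2, 1]` on `[−π/3, π/3]`. The factorisations
`q(1) − q(c) = (1 − c)(κ − 1 − 4c − 4c²)` and, when `12 c₀² = κ + 3`,
`q(c₀) − q(c) = 4 (c − c₀)² (c + 2 c₀)` settle both regimes: for `κ ≥ 9` the cubic increases up to
`c = 1`, while for `κ < 9` its maximum on `[1/2, 1]` is at the critical point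
`c₀ = √((κ + 3)/12) < 1`, which is exactly `4 sin² t = 3 − κ/3`.
-/

open Set

noncomputable def cubicProfile (κ c : ℝ) : ℝ :=
  (κ + 3) * c - 4 * c ^ 3

section cubicProfile

variable {κ c : ℝ}

lemma cubicProfile_one_sub_cubicProfile (κ c : ℝ) :
    cubicProfile κ 1 - cubicProfile κ c = (1 - c) * (κ - 1 - 4 * c - 4 * c ^ 2) := by
  unfold cubicProfile; ring

lemma cubicProfile_lt_cubicProfile_one (hκ : 9 ≤ κ) (hc : -2 < c) (hc1 : c < 1) :
    cubicProfile κ c < cubicProfile κ 1 := by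
  have hpos : 0 < κ - 1 - 4 * c - 4 * c ^ 2 := by
    nlinarith [mul_pos (sub_pos.2 hc1) (show 0 < 2 + c by linarith)]
  rw [← sub_pos, cubicProfile_one_sub_cubicProfile]
  exact mul_pos (sub_pos.2 hc1) hpos

lemma cubicProfile_one_le (hc : 1 - (9 - κ) / 12 ≤ c) (hc1 : c ≤ 1) :
    cubicProfile κ 1 ≤ cubicProfile κ c := by
  have hneg : κ - 1 - 4 * c - 4 * c ^ 2 ≤ 0 := by nlinarith [sq_nonneg (1 - c)]
  rw [← sub_nonpos, cubicProfile_one_sub_cubicProfile]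
  exact mul_nonpos_of_nonneg_of_nonpos (sub_nonneg.2 hc1) hneg

lemma cubicProfile_le_of_twelve_mul_sq_eq {c₀ : ℝ} (hc₀ : 12 * c₀ ^ 2 = κ + 3)
    (hc : -2 * c₀ ≤ c) :
    cubicProfile κ c ≤ cubicProfile κ c₀ := by
  have hfactor : cubicProfile κ c₀ - cubicProfile κ c = 4 * (c - c₀) ^ 2 * (c + 2 * c₀) := by
    unfold cubicProfile; rw [← hc₀]; ring
  rw [← sub_nonneg, hfactor]
  have : 0 ≤ c + 2 * c₀ := by linarith
  positivity

end cubicProfile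

lemma half_le_cos_of_mem_Icc {t : ℝ} (ht : t ∈ Icc (-(π / 3)) (π / 3)) : 1 / 2 ≤ cos t := by
  rw [← cos_abs, ← cos_pi_div_three]
  exact cos_le_cos_of_nonneg_of_le_pi (abs_nonneg t) (by linarith [pi_pos]) (abs_le.2 ht)

lemma exists_mem_Ioc_sin_sq_eq {s : ℝ} (hs : s ∈ Ioc 0 (3 / 4)) :
    ∃ t ∈ Ioc 0 (π / 3), sin t ^ 2 = s := by
  have hcont : ContinuousOn (fun t => sin t ^ 2) (Icc 0 (π / 3)) := by fun_prop
  have hs' : s ∈ Ioc (sin 0 ^ 2) (sin (π / 3) ^ 2) := by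
    rwa [sin_zero, sq_sin_pi_div_three, zero_pow two_ne_zero]
  exact intermediate_value_Ioc (by linarith [pi_pos]) hcont hs'

lemma PfunPi_eq_sin_mul_cubicProfile {ζ : ℝ} (hζ : sin ζ ≠ 0) (t : ℝ) :
    PfunPi ζ t = sin ζ * cubicProfile (cot ζ) (cos t) := by
  rw [PfunPi, cubicProfile, cos_three_mul, cot_eq_cos_div_sin]
  field_simp
  ring

section PfunPi

variable {ζ : ℝ} (hζ : 0 < sin ζ)
include hζ

lemma PfunPi_lt_PfunPi_zero (h9 : 9 ≤ cot ζ) {t : ℝ} (ht : t ∈ Icc (-(π / 3)) (π / 3))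
    (ht0 : t ≠ 0) : PfunPi ζ t < PfunPi ζ 0 := by
  have hcos : cos t ≠ 1 := fun h => ht0 <|
    (cos_eq_one_iff_of_lt_of_lt (by linarith [ht.1, pi_pos]) (by linarith [ht.2, pi_pos])).1 h
  rw [PfunPi_eq_sin_mul_cubicProfile hζ.ne', PfunPi_eq_sin_mul_cubicProfile hζ.ne', cos_zero]
  refine mul_lt_mul_of_pos_left (cubicProfile_lt_cubicProfile_one h9 ?_ ?_) hζ
  · linarith [half_le_cos_of_mem_Icc ht]
  · exact lt_of_le_of_ne (cos_le_one t) hcos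

lemma exists_forall_abs_lt_PfunPi_zero_le (h9 : cot ζ < 9) :
    ∃ ε > (0 : ℝ), ∀ t : ℝ, |t| < ε → PfunPi ζ 0 ≤ PfunPi ζ t := by
  refine ⟨√((9 - cot ζ) / 6), sqrt_pos.2 (by linarith), fun t ht => ?_⟩
  have ht2 : t ^ 2 < (9 - cot ζ) / 6 := by
    rwa [← sq_abs, ← lt_sqrt (abs_nonneg t)]
  have hcos : 1 - (9 - cot ζ) / 12 ≤ cos t := by linarith [one_sub_sq_div_two_le_cos (x := t)]
  rw [PfunPi_eq_sin_mul_cubicProfile hζ.ne', PfunPi_eq_sin_mul_cubicProfile hζ.ne', cos_zero]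
  exact mul_le_mul_of_nonneg_left (cubicProfile_one_le hcos (cos_le_one t)) hζ.le

lemma PfunPi_le_of_four_mul_sin_sq_eq {t u : ℝ} (ht : t ∈ Icc (-(π / 3)) (π / 3))
    (hsin : 4 * sin t ^ 2 = 3 - cot ζ / 3) (hu : u ∈ Icc (-(π / 3)) (π / 3)) :
    PfunPi ζ u ≤ PfunPi ζ t := by
  have hcos : 12 * cos t ^ 2 = cot ζ + 3 := by linarith [sin_sq_add_cos_sq t]
  have hcu : -2 * cos t ≤ cos u := by
    linarith [half_le_cos_of_mem_Icc ht, half_le_cos_of_mem_Icc hu]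
  rw [PfunPi_eq_sin_mul_cubicProfile hζ.ne', PfunPi_eq_sin_mul_cubicProfile hζ.ne']
  exact mul_le_mul_of_nonneg_left (cubicProfile_le_of_twelve_mul_sq_eq hcos hcu) hζ.le

end PfunPi

/-- For `ζ ∈ (0, π/2)`: if `cot ζ ≥ 9`, then `t = 0` is the unique global maximum point of
`P_{ζ,π}` on `[−π/3, π/3]`; if `cot ζ < 9`, then `t = 0` is a local minimum and the two
solutions `t_± ∈ [−π/3, π/3]` of `4 sin² t = 3 − cot(ζ)/3` are the global maximum points. -/
theorem stmt13 (ζ : ℝ) (hζ : ζ ∈ Set.Ioo (0 : ℝ) (π / 2)) :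
    (9 ≤ Real.cot ζ →
      (∀ t ∈ Set.Icc (-(π / 3)) (π / 3), PfunPi ζ t ≤ PfunPi ζ 0) ∧
      (∀ t ∈ Set.Icc (-(π / 3)) (π / 3),
        (∀ u ∈ Set.Icc (-(π / 3)) (π / 3), PfunPi ζ u ≤ PfunPi ζ t) → t = 0)) ∧
    (Real.cot ζ < 9 →
      (∃ ε > (0 : ℝ), ∀ t : ℝ, |t| < ε → PfunPi ζ 0 ≤ PfunPi ζ t) ∧
      (∃ t ∈ Set.Icc (-(π / 3)) (π / 3), 0 < t ∧
        4 * Real.sin t ^ 2 = 3 - Real.cot ζ / 3) ∧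
      (∀ t ∈ Set.Icc (-(π / 3)) (π / 3), 4 * Real.sin t ^ 2 = 3 - Real.cot ζ / 3 →
        ∀ u ∈ Set.Icc (-(π / 3)) (π / 3), PfunPi ζ u ≤ PfunPi ζ t)) := by
  have hsin : 0 < sin ζ := sin_pos_of_pos_of_lt_pi hζ.1 (by linarith [hζ.2, pi_pos])
  have hcot : 0 < cot ζ := by
    rw [cot_eq_cos_div_sin]
    exact div_pos (cos_pos_of_mem_Ioo ⟨by linarith [hζ.1, pi_pos], hζ.2⟩) hsin
  have h0 : (0 : ℝ) ∈ Icc (-(π / 3)) (π / 3) := ⟨by linarith [pi_pos], by linarith [pi_pos]⟩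
  refine ⟨fun h9 => ⟨fun t ht => ?_, fun t ht hmax => ?_⟩,
    fun h9 => ⟨exists_forall_abs_lt_PfunPi_zero_le hsin h9, ?_,
      fun t ht hsol u hu => PfunPi_le_of_four_mul_sin_sq_eq hsin ht hsol hu⟩⟩
  · rcases eq_or_ne t 0 with rfl | ht0
    · exact le_rfl
    · exact (PfunPi_lt_PfunPi_zero hsin h9 ht ht0).le
  · by_contra ht0
    exact (hmax 0 h0).not_gt (PfunPi_lt_PfunPi_zero hsin h9 ht ht0)
  · obtain ⟨t, ⟨ht0, htπ⟩, ht⟩ :=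
      exists_mem_Ioc_sin_sq_eq (s := (3 - cot ζ / 3) / 4) ⟨by linarith, by linarith⟩
    exact ⟨t, ⟨by linarith [pi_pos], htπ⟩, ht0, by linarith⟩
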